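/- With the broad norm defined as in the context, for 1 ≤ p, p₀, p₁ < ∞ and 0 ≤ α ≤ 1 satisfying 1/p = (1−α)/p₀ + α/p₁, any vector-valued g with supp ĝ_j ⊂ N_{(KM)^{−2}}(Γ_j(σ)), any U ⊂ ℝⁿ and any integer A ≥ 1, one has Hölder's inequality for the broad norm: ‖Sq g‖_{BL^p_{k,2A}(U)} ≲ ‖Sq g‖_{BL^{p₀}_{k,A}(U)}^{1−α} · ‖Sq g‖_{BL^{p₁}_{k,A}(U)}^{α}. -/

import Mathlib

open MeasureTheory Metric Set
open scoped FourierTransform RealInnerProductSpace ENNReal Convolution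

noncomputable section

/-- Euclidean `n`-space. -/
abbrev Eu (n : ℕ) : Type := EuclideanSpace ℝ (Fin n)
/-- The first `n-1` coordinates of a point of `ℝⁿ`. -/
def proj {n : ℕ} (ξ : Eu n) : Eu (n - 1) := WithLp.toLp 2 (fun i => ξ (Fin.castLE (Nat.sub_le n 1) i))

/-- The last coordinate of a point of `ℝⁿ`. -/
def lastCoord {n : ℕ} (ξ : Eu n) : ℝ := if h : n = 0 then 0 else ξ ⟨n - 1, by omega⟩

/-- Assemble a point of `ℝⁿ` from its first `n-1` coordinates and its last coordinate. -/
def assemble {n : ℕ} (v : Eu (n - 1)) (a : ℝ) : Eu n :=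
  WithLp.toLp 2 (fun i => if h : (i : ℕ) < n - 1 then v ⟨(i : ℕ), h⟩ else a)

/-- The (upward) Gauss map of the graph of `h : ℝ^{n-1} → ℝ`, expressed in the
graph coordinate `ξ̄`:  `G(ξ̄) = (∇h(ξ̄), 1)/|(∇h(ξ̄), 1)|`. -/
def gauss1 {n : ℕ} (h : Eu (n - 1) → ℝ) (ξ : Eu (n - 1)) : Eu n :=
  ‖assemble (gradient h ξ) (1 : ℝ)‖⁻¹ • assemble (gradient h ξ) (1 : ℝ)

/-- The Gauss map of the hypersurface `Γ = {(ξ̄, Φ(ξ̄; t))}`. -/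
def gaussMap {n : ℕ} (Φ : Eu (n - 1) → ℝ → ℝ) (t : ℝ) : Eu (n - 1) → Eu n :=
  gauss1 (fun y => Φ y t)

/-- The hypersurface `Γ = {(ξ̄, Φ(ξ̄;t)) : |ξ̄| ≤ 1/2}` as a subset of `ℝⁿ`. -/
def gammaSet {n : ℕ} (Φ : Eu (n - 1) → ℝ → ℝ) (t : ℝ) : Set (Eu n) :=
  {ξ | ‖proj ξ‖ ≤ 1 / 2 ∧ lastCoord ξ = Φ (proj ξ) t}

/-- The part `Γ(σ)` of the hypersurface `Γ` whose Gauss image lies in the cap `σ`. -/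
def gammaCap {n : ℕ} (Φ : Eu (n - 1) → ℝ → ℝ) (t : ℝ) (σ : Set (Eu n)) : Set (Eu n) :=
  {ξ ∈ gammaSet Φ t | gaussMap Φ t (proj ξ) ∈ σ}

/-- `σ` is a cap of radius `r` on the unit sphere, centered at `z`. -/
def IsCapC {n : ℕ} (σ : Set (Eu n)) (z : Eu n) (r : ℝ) : Prop :=
  ‖z‖ = 1 ∧ σ = Metric.closedBall z r ∩ Metric.sphere 0 1

/-- `σ` is a cap of radius `r` on the unit sphere. -/
def IsCap {n : ℕ} (σ : Set (Eu n)) (r : ℝ) : Prop := ∃ z, IsCapC σ z r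

/-- The radii `t_j = 1 + j/R`, `1 ≤ j ≤ R`. -/
def tj (R : ℕ) (j : Fin R) : ℝ := 1 + ((j : ℕ) + 1) / (R : ℝ)

/-- Hypotheses on the generating function `Φ` of the family of hypersurfaces:
smooth on `B^{n-1}(0,1) × [1,2]`, with `|∂_t Φ| ∼ 1`, `|∂_t ∇_ξ̄ Φ| ≲ 1`, and all
eigenvalues of the Hessian `∇²_ξ̄ Φ` of the same sign and of magnitude `∼ 1`,
with implicit constants `c₀, C₀`. -/
structure PhiHyp (n : ℕ) (c₀ C₀ : ℝ) (Φ : Eu (n - 1) → ℝ → ℝ) : Prop where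
  hc₀ : 0 < c₀
  smooth : ContDiffOn ℝ (⊤ : ℕ∞) (fun q : Eu (n - 1) × ℝ => Φ q.1 q.2) (ball 0 1 ×ˢ Icc 1 2)
  dt_lower : ∀ ξ ∈ ball (0 : Eu (n - 1)) 1, ∀ t ∈ Icc (1 : ℝ) 2, c₀ ≤ |deriv (Φ ξ) t|
  dt_upper : ∀ ξ ∈ ball (0 : Eu (n - 1)) 1, ∀ t ∈ Icc (1 : ℝ) 2, |deriv (Φ ξ) t| ≤ C₀
  dtgrad : ∀ ξ ∈ ball (0 : Eu (n - 1)) 1, ∀ t ∈ Icc (1 : ℝ) 2,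
    ‖deriv (fun s => gradient (fun y => Φ y s) ξ) t‖ ≤ C₀
  hess : (∀ ξ ∈ ball (0 : Eu (n - 1)) 1, ∀ t ∈ Icc (1 : ℝ) 2, ∀ v : Eu (n - 1),
      c₀ * ‖v‖ ^ 2 ≤ iteratedFDeriv ℝ 2 (fun y => Φ y t) ξ ![v, v] ∧
      iteratedFDeriv ℝ 2 (fun y => Φ y t) ξ ![v, v] ≤ C₀ * ‖v‖ ^ 2) ∨
    (∀ ξ ∈ ball (0 : Eu (n - 1)) 1, ∀ t ∈ Icc (1 : ℝ) 2, ∀ v : Eu (n - 1),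
      c₀ * ‖v‖ ^ 2 ≤ -(iteratedFDeriv ℝ 2 (fun y => Φ y t) ξ ![v, v]) ∧
      -(iteratedFDeriv ℝ 2 (fun y => Φ y t) ξ ![v, v]) ≤ C₀ * ‖v‖ ^ 2)

/-- The square function `Sq g = (Σ_j |g_j|²)^{1/2}` of a vector-valued function. -/
def sqfn {n R : ℕ} (g : Fin R → Eu n → ℂ) (x : Eu n) : ℝ :=
  Real.sqrt (∑ j, ‖g j x‖ ^ 2)
/-- `B` is a (closed) rectangle centered somewhere, with `n−1` side lengths `a`
orthogonal to `e` and side length `b` in the direction `e`. -/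
def IsRect {n : ℕ} (e : Eu n) (a b : ℝ) (B : Set (Eu n)) : Prop :=
  ∃ (c : Eu n) (u : Fin (n - 1) → Eu n), Orthonormal ℝ u ∧ (∀ i, ⟪u i, e⟫ = 0) ∧
    B = {x | (∀ i, |⟪x - c, u i⟫| ≤ a / 2) ∧ |⟪x - c, e⟫| ≤ b / 2}

/-- The cap `τ` makes angle at least `θ` with the subspace `V` (written `τ ∉ V`). -/
def CapAway {n : ℕ} (τ : Set (Eu n)) (V : Submodule ℝ (Eu n)) (θ : ℝ) : Prop :=
  ∀ v ∈ τ, ∀ w ∈ V, w ≠ 0 → θ ≤ InnerProductGeometry.angle v w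

/-- The piece `g_τ` of a vector-valued function `g` associated to the cap indexed by `t`,
with components `g_{j,τ} = φ_{j,τ} ∗ g_j`. -/
def capPiece {n R : ℕ} {ι : Type} (φf : ι → Fin R → Eu n → ℂ) (g : Fin R → Eu n → ℂ)
    (t : ι) : Fin R → Eu n → ℂ :=
  fun j => convolution (φf t j) (g j) (ContinuousLinearMap.mul ℝ ℂ) volume

/-- The quantity `ν(B)`: the min over `(k−1)`-dimensional subspaces `V_1, …, V_A` of the
max over caps `τ` with `τ ∉ V_a` for all `a` of `∫_B |Sq g_τ|^p`. -/
def nuBroad {n R : ℕ} (p K : ℝ) (k A : ℕ) {ι : Type} [Fintype ι]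
    (τf : ι → Set (Eu n)) (gτ : ι → Fin R → Eu n → ℂ) (B : Set (Eu n)) : ℝ≥0∞ :=
  ⨅ V ∈ {V : Fin A → Submodule ℝ (Eu n) | ∀ a, Module.finrank ℝ (V a) = k - 1},
    ⨆ t ∈ {t : ι | ∀ a, CapAway (τf t) (V a) K⁻¹},
      ∫⁻ x in B, ENNReal.ofReal (sqfn (gτ t) x ^ p)

/-- The broad norm `‖Sq g‖_{BL^p_{k,A}(U)}` relative to the partition `Bf` of `ℝⁿ`
into rectangles and the family of cap pieces `gτ`. -/
def broadNorm {n R : ℕ} (p K : ℝ) (k A : ℕ) {ι : Type} [Fintype ι]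
    (τf : ι → Set (Eu n)) (gτ : ι → Fin R → Eu n → ℂ)
    (Bf : ℕ → Set (Eu n)) (U : Set (Eu n)) : ℝ≥0∞ :=
  (∑' i : ℕ, volume (Bf i ∩ U) / volume (Bf i) * nuBroad p K k A τf gτ (Bf i)) ^ (1 / p)

/-- All the data of the broad-norm setup: the hypersurfaces, the cap `σ` with center `cσ`,
the covering family of `K⁻¹M⁻¹`-caps `τf`, the frequency partition of unity `φf`, and the
partition `Bf` of `ℝⁿ` into `MK² × ⋯ × MK² × M²K²` rectangles pointing in direction `cσ`. -/
structure BroadData (n R : ℕ) (c₀ C₀ K M : ℝ) (Φ : Eu (n - 1) → ℝ → ℝ)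
    (σ : Set (Eu n)) (cσ : Eu n) {ι : Type} [Fintype ι]
    (τf : ι → Set (Eu n)) (φf : ι → Fin R → Eu n → ℂ) (Bf : ℕ → Set (Eu n)) : Prop where
  hΦ : PhiHyp n c₀ C₀ Φ
  hσ : IsCapC σ cσ M⁻¹
  hτ : ∀ t, IsCap (τf t) (K⁻¹ * M⁻¹)
  hτsub : ∀ t, τf t ⊆ σ
  hcover : σ ⊆ ⋃ t, τf t
  hφ_smooth : ∀ t j, ContDiff ℝ (⊤ : ℕ∞) (φf t j)
  hφ_supp : ∀ t j, Function.support (𝓕 (φf t j)) ⊆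
    Metric.thickening (((K * M) ^ 2)⁻¹) (gammaCap Φ (tj R j) (τf t))
  hφ_sum : ∀ (j : Fin R), ∀ ξ ∈ Metric.thickening (((K * M) ^ 2)⁻¹) (gammaCap Φ (tj R j) σ),
    ∑ t, (𝓕 (φf t j)) ξ = 1
  hB_rect : ∀ i, IsRect cσ (M * K ^ 2) (M ^ 2 * K ^ 2) (Bf i)
  hB_disj : Pairwise (Function.onFun Disjoint Bf)
  hB_cover : (⋃ i, Bf i) = Set.univ

-- generic Hölder for lintegral with weights θ₀+θ₁=1
lemma holder_core {X : Type*} [MeasurableSpace X] (μ : Measure X) {u v : X → ℝ≥0∞}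
    (hu : Measurable u) (hv : Measurable v) {θ₀ θ₁ : ℝ} (h0 : 0 < θ₀) (h1 : 0 < θ₁)
    (hsum : θ₀ + θ₁ = 1) :
    ∫⁻ x, (u x) ^ θ₀ * (v x) ^ θ₁ ∂μ ≤ (∫⁻ x, u x ∂μ) ^ θ₀ * (∫⁻ x, v x ∂μ) ^ θ₁ := by
  have hθ02 : θ₀ < 1 := by linarith
  have hconj : (1/θ₀).HolderConjugate (1/θ₁) := by
    constructor
    · rw [one_div, one_div, inv_inv, inv_inv, inv_one]; exact hsum
    · positivity
    · positivity
  have := ENNReal.lintegral_mul_le_Lp_mul_Lq μ hconj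
    (f := fun x => (u x) ^ θ₀) (g := fun x => (v x) ^ θ₁)
    ((hu.pow_const θ₀).aemeasurable) ((hv.pow_const θ₁).aemeasurable)
  simp only [Pi.mul_apply] at this
  calc ∫⁻ x, (u x) ^ θ₀ * (v x) ^ θ₁ ∂μ
      ≤ (∫⁻ x, ((u x) ^ θ₀) ^ (1/θ₀) ∂μ) ^ (1/(1/θ₀)) *
        (∫⁻ x, ((v x) ^ θ₁) ^ (1/θ₁) ∂μ) ^ (1/(1/θ₁)) := this
    _ = (∫⁻ x, u x ∂μ) ^ θ₀ * (∫⁻ x, v x ∂μ) ^ θ₁ := by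
        rw [one_div_one_div, one_div_one_div]
        congr 2 <;> refine lintegral_congr fun x => ?_ <;>
          rw [← ENNReal.rpow_mul] <;>
          [rw [mul_one_div_cancel (ne_of_gt h0)]; rw [mul_one_div_cancel (ne_of_gt h1)]] <;>
          rw [ENNReal.rpow_one]

-- Lyapunov interpolation for lintegral, no measurability assumptions
lemma lyapunov {X : Type*} [MeasurableSpace X] (μ : Measure X) (f : X → ℝ≥0∞)
    {p p₀ p₁ θ₀ θ₁ : ℝ} (hp₀ : 0 < p₀) (hp₁ : 0 < p₁)
    (hθ₀ : 0 ≤ θ₀) (hθ₁ : 0 ≤ θ₁) (hsum : θ₀ + θ₁ = 1) (hp : θ₀ * p₀ + θ₁ * p₁ = p) :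
    ∫⁻ x, f x ^ p ∂μ ≤ (∫⁻ x, f x ^ p₀ ∂μ) ^ θ₀ * (∫⁻ x, f x ^ p₁ ∂μ) ^ θ₁ := by
  have hppos : 0 < p := by
    rcases lt_or_ge 0 θ₀ with h | h
    · nlinarith [mul_nonneg hθ₁ hp₁.le]
    · have : θ₀ = 0 := le_antisymm h hθ₀
      nlinarith
  rcases eq_or_lt_of_le hθ₀ with h0 | h0
  · have hθ₁1 : θ₁ = 1 := by linarith
    have hpp : p = p₁ := by rw [← hp, ← h0, hθ₁1]; ring
    rw [← h0, hθ₁1, ENNReal.rpow_zero, ENNReal.rpow_one, one_mul, hpp]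
  rcases eq_or_lt_of_le hθ₁ with h1 | h1
  · have hθ₀1 : θ₀ = 1 := by linarith
    have hpp : p = p₀ := by rw [← hp, ← h1, hθ₀1]; ring
    rw [← h1, hθ₀1, ENNReal.rpow_zero, ENNReal.rpow_one, mul_one, hpp]
  -- main case
  obtain ⟨φ, hφm, hφle, hφeq⟩ := exists_measurable_le_lintegral_eq μ (fun x => f x ^ p)
  have hφle' : ∀ x, φ x ≤ f x ^ p := hφle
  set h : X → ℝ≥0∞ := fun x => φ x ^ p⁻¹ with hh
  have hhm : Measurable h := hφm.pow_const _
  have hhp : ∀ x, h x ^ p = φ x := by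
    intro x
    rw [hh, ← ENNReal.rpow_mul, inv_mul_cancel₀ (ne_of_gt hppos), ENNReal.rpow_one]
  have hhle : ∀ x, h x ≤ f x := by
    intro x
    calc h x = φ x ^ p⁻¹ := rfl
      _ ≤ (f x ^ p) ^ p⁻¹ := ENNReal.rpow_le_rpow (hφle' x) (by positivity)
      _ = f x := by rw [← ENNReal.rpow_mul, mul_inv_cancel₀ (ne_of_gt hppos), ENNReal.rpow_one]
  have key : ∀ x, (h x ^ p₀) ^ θ₀ * (h x ^ p₁) ^ θ₁ = φ x := by
    intro x
    rw [← ENNReal.rpow_mul (h x) p₀ θ₀, ← ENNReal.rpow_mul (h x) p₁ θ₁,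
      ← ENNReal.rpow_add_of_nonneg _ _ (by positivity) (by positivity),
      show p₀ * θ₀ + p₁ * θ₁ = p by linarith, hhp]
  calc ∫⁻ x, f x ^ p ∂μ = ∫⁻ x, φ x ∂μ := hφeq
    _ = ∫⁻ x, (h x ^ p₀) ^ θ₀ * (h x ^ p₁) ^ θ₁ ∂μ := by
        exact (lintegral_congr fun x => key x).symm
    _ ≤ (∫⁻ x, h x ^ p₀ ∂μ) ^ θ₀ * (∫⁻ x, h x ^ p₁ ∂μ) ^ θ₁ :=
        holder_core μ (hhm.pow_const _) (hhm.pow_const _) h0 h1 hsum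
    _ ≤ (∫⁻ x, f x ^ p₀ ∂μ) ^ θ₀ * (∫⁻ x, f x ^ p₁ ∂μ) ^ θ₁ := by
        refine mul_le_mul' ?_ ?_
        · exact ENNReal.rpow_le_rpow
            (lintegral_mono fun x => ENNReal.rpow_le_rpow (hhle x) hp₀.le) hθ₀
        · exact ENNReal.rpow_le_rpow
            (lintegral_mono fun x => ENNReal.rpow_le_rpow (hhle x) hp₁.le) hθ₁

-- Hölder for tsum over ℕ
lemma tsum_holder (x y : ℕ → ℝ≥0∞) {θ₀ θ₁ : ℝ} (hθ₀ : 0 ≤ θ₀) (hθ₁ : 0 ≤ θ₁)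
    (hsum : θ₀ + θ₁ = 1) :
    ∑' i, (x i) ^ θ₀ * (y i) ^ θ₁ ≤ (∑' i, x i) ^ θ₀ * (∑' i, y i) ^ θ₁ := by
  rcases eq_or_lt_of_le hθ₀ with h0 | h0
  · have h1 : θ₁ = 1 := by linarith
    simp [← h0, h1]
  rcases eq_or_lt_of_le hθ₁ with h1 | h1
  · have h0' : θ₀ = 1 := by linarith
    simp [← h1, h0']
  have := holder_core (Measure.count : Measure ℕ) (u := x) (v := y)
    (measurable_of_countable x) (measurable_of_countable y) h0 h1 hsum
  simpa [lintegral_count] using this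

lemma biInf_attained {ι β : Type*} [Finite ι] {D : Set β} (hD : D.Nonempty)
    (adm : β → Set ι) (h : ι → ℝ≥0∞) :
    ∃ V ∈ D, (⨆ t ∈ adm V, h t) = ⨅ V ∈ D, ⨆ t ∈ adm V, h t := by
  set F : β → ℝ≥0∞ := fun V => ⨆ t ∈ adm V, h t with hF
  have hsub : F '' D ⊆ Set.range (fun T : Set ι => ⨆ t ∈ T, h t) := by
    rintro _ ⟨V, _, rfl⟩; exact ⟨adm V, rfl⟩
  have himg : (F '' D).Finite := (Set.finite_range _).subset hsub
  obtain ⟨V, hV, hVeq⟩ := (hD.image F).csInf_mem himg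
  exact ⟨V, hV, hVeq.trans sInf_image⟩

lemma weight_mul {w a b c : ℝ≥0∞} {θ₀ θ₁ : ℝ} (hθ₀ : 0 ≤ θ₀) (hθ₁ : 0 ≤ θ₁)
    (hsum : θ₀ + θ₁ = 1) (h : c ≤ a ^ θ₀ * b ^ θ₁) :
    w * c ≤ (w * a) ^ θ₀ * (w * b) ^ θ₁ := by
  rw [ENNReal.mul_rpow_of_nonneg _ _ hθ₀, ENNReal.mul_rpow_of_nonneg _ _ hθ₁]
  calc w * c ≤ w * (a ^ θ₀ * b ^ θ₁) := mul_le_mul' le_rfl h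
    _ = (w ^ θ₀ * w ^ θ₁) * (a ^ θ₀ * b ^ θ₁) := by
        rw [← ENNReal.rpow_add_of_nonneg _ _ hθ₀ hθ₁, hsum, ENNReal.rpow_one]
    _ = w ^ θ₀ * a ^ θ₀ * (w ^ θ₁ * b ^ θ₁) := by ring

lemma nu_interp {n R : ℕ} {ι : Type} [Fintype ι] (τf : ι → Set (Eu n))
    (gτ : ι → Fin R → Eu n → ℂ) (B : Set (Eu n)) (K : ℝ) (k A : ℕ)
    (hkn : k - 1 ≤ n) {p p₀ p₁ θ₀ θ₁ : ℝ} (hp₀ : 0 < p₀) (hp₁ : 0 < p₁)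
    (hθ₀ : 0 ≤ θ₀) (hθ₁ : 0 ≤ θ₁) (hsum : θ₀ + θ₁ = 1) (hp : θ₀ * p₀ + θ₁ * p₁ = p) :
    nuBroad p K k (2 * A) τf gτ B ≤
      (nuBroad p₀ K k A τf gτ B) ^ θ₀ * (nuBroad p₁ K k A τf gτ B) ^ θ₁ := by
  have hppos : 0 < p := by
    rcases lt_or_ge 0 θ₀ with h | h
    · nlinarith [mul_nonneg hθ₁ hp₁.le]
    · have : θ₀ = 0 := le_antisymm h hθ₀
      nlinarith
  -- a (k-1)-dimensional subspace exists
  obtain ⟨v, hv⟩ := exists_linearIndependent_of_le_finrank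
    (R := ℝ) (M := Eu n) (n := k - 1) (by rw [finrank_euclideanSpace_fin]; exact hkn)
  set W₀ : Submodule ℝ (Eu n) := Submodule.span ℝ (Set.range v) with hW₀
  have hW₀rank : Module.finrank ℝ W₀ = k - 1 := by
    rw [hW₀, finrank_span_eq_card hv, Fintype.card_fin]
  have hDne : ∀ m : ℕ, ({V : Fin m → Submodule ℝ (Eu n) |
      ∀ a, Module.finrank ℝ (V a) = k - 1} : Set _).Nonempty :=
    fun m => ⟨fun _ => W₀, fun _ => hW₀rank⟩
  set h₀ : ι → ℝ≥0∞ := fun t => ∫⁻ x in B, ENNReal.ofReal (sqfn (gτ t) x ^ p₀) with hh₀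
  set h₁ : ι → ℝ≥0∞ := fun t => ∫⁻ x in B, ENNReal.ofReal (sqfn (gτ t) x ^ p₁) with hh₁
  obtain ⟨V0, hV0, hV0eq⟩ := biInf_attained (hDne A)
    (fun V => {t : ι | ∀ a, CapAway (τf t) (V a) K⁻¹}) h₀
  obtain ⟨V1, hV1, hV1eq⟩ := biInf_attained (hDne A)
    (fun V => {t : ι | ∀ a, CapAway (τf t) (V a) K⁻¹}) h₁
  set W : Fin (2 * A) → Submodule ℝ (Eu n) := fun a =>
    if h : (a : ℕ) < A then V0 ⟨(a : ℕ), h⟩ else V1 ⟨(a : ℕ) - A, by omega⟩ with hW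
  have hWmem : ∀ a, Module.finrank ℝ (W a) = k - 1 := by
    intro a
    show Module.finrank ℝ (if h : (a : ℕ) < A then V0 ⟨(a : ℕ), h⟩
      else V1 ⟨(a : ℕ) - A, by omega⟩ : Submodule ℝ (Eu n)) = k - 1
    by_cases h : (a : ℕ) < A
    · rw [dif_pos h]; exact hV0 _
    · rw [dif_neg h]; exact hV1 _
  calc nuBroad p K k (2 * A) τf gτ B
      ≤ ⨆ t ∈ {t : ι | ∀ a, CapAway (τf t) (W a) K⁻¹},
          ∫⁻ x in B, ENNReal.ofReal (sqfn (gτ t) x ^ p) := iInf₂_le W hWmem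
    _ ≤ (nuBroad p₀ K k A τf gτ B) ^ θ₀ * (nuBroad p₁ K k A τf gτ B) ^ θ₁ := by
        refine iSup₂_le fun t ht => ?_
        have ht0 : ∀ a : Fin A, CapAway (τf t) (V0 a) K⁻¹ := by
          intro a
          have h2 := ht ⟨(a : ℕ), by omega⟩
          have e : W ⟨(a : ℕ), by omega⟩ = V0 a := by simp only [hW]; simp [a.isLt]
          rwa [e] at h2
        have ht1 : ∀ a : Fin A, CapAway (τf t) (V1 a) K⁻¹ := by
          intro a
          have h2 := ht ⟨A + (a : ℕ), by omega⟩
          have hcond : ¬ (A + (a : ℕ) < A) := by omega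
          have e : W ⟨A + (a : ℕ), by omega⟩ = V1 a := by
            simp only [hW]; simp [hcond, Nat.add_sub_cancel_left]
          rwa [e] at h2
        calc (∫⁻ x in B, ENNReal.ofReal (sqfn (gτ t) x ^ p))
            = ∫⁻ x in B, (ENNReal.ofReal (sqfn (gτ t) x)) ^ p := by
              exact lintegral_congr fun x =>
                (ENNReal.ofReal_rpow_of_nonneg (x := sqfn (gτ t) x)
                  (Real.sqrt_nonneg _) hppos.le).symm
          _ ≤ (∫⁻ x in B, (ENNReal.ofReal (sqfn (gτ t) x)) ^ p₀) ^ θ₀ *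
              (∫⁻ x in B, (ENNReal.ofReal (sqfn (gτ t) x)) ^ p₁) ^ θ₁ :=
              lyapunov _ _ hp₀ hp₁ hθ₀ hθ₁ hsum hp
          _ = (h₀ t) ^ θ₀ * (h₁ t) ^ θ₁ := by
              rw [hh₀, hh₁]
              congr 2
              · exact lintegral_congr fun x =>
                  ENNReal.ofReal_rpow_of_nonneg (x := sqfn (gτ t) x) (Real.sqrt_nonneg _) hp₀.le
              · exact lintegral_congr fun x =>
                  ENNReal.ofReal_rpow_of_nonneg (x := sqfn (gτ t) x) (Real.sqrt_nonneg _) hp₁.le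
          _ ≤ (⨆ t ∈ {t : ι | ∀ a, CapAway (τf t) (V0 a) K⁻¹}, h₀ t) ^ θ₀ *
              (⨆ t ∈ {t : ι | ∀ a, CapAway (τf t) (V1 a) K⁻¹}, h₁ t) ^ θ₁ := by
              refine mul_le_mul' ?_ ?_
              · exact ENNReal.rpow_le_rpow (le_iSup₂_of_le t ht0 le_rfl) hθ₀
              · exact ENNReal.rpow_le_rpow (le_iSup₂_of_le t ht1 le_rfl) hθ₁
          _ = (nuBroad p₀ K k A τf gτ B) ^ θ₀ * (nuBroad p₁ K k A τf gτ B) ^ θ₁ := by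
              rw [hV0eq, hV1eq]; rfl

/-- **Hölder's inequality for the broad norm** (`(3.12)`): for `1/p = (1−α)/p₀ + α/p₁`,
`‖Sq g‖_{BL^p_{k,2A}(U)} ≲ ‖Sq g‖_{BL^{p₀}_{k,A}(U)}^{1−α} ‖Sq g‖_{BL^{p₁}_{k,A}(U)}^{α}`. -/
theorem broad_norm_holder (n : ℕ) (hn : 3 ≤ n) (k : ℕ) (hk2 : 2 ≤ k) (hkn : k ≤ n - 1)
    (p p₀ p₁ α : ℝ) (hp : 1 ≤ p) (hp₀ : 1 ≤ p₀) (hp₁ : 1 ≤ p₁)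
    (hα0 : 0 ≤ α) (hα1 : α ≤ 1) (hrel : 1 / p = (1 - α) / p₀ + α / p₁) (c₀ C₀ : ℝ) :
    ∃ C : ℝ, 0 < C ∧
      ∀ (R : ℕ), 1 ≤ R → ∀ (K M : ℝ), 1 ≤ K → 1 ≤ M → ∀ (A : ℕ), 1 ≤ A →
      ∀ (Φ : Eu (n - 1) → ℝ → ℝ) (σ : Set (Eu n)) (cσ : Eu n)
        (ι : Type) (_ : Fintype ι) (τf : ι → Set (Eu n)) (φf : ι → Fin R → Eu n → ℂ)
        (Bf : ℕ → Set (Eu n)), BroadData n R c₀ C₀ K M Φ σ cσ τf φf Bf →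
      ∀ (U : Set (Eu n)) (g : Fin R → Eu n → ℂ),
        (∀ j, Function.support (𝓕 (g j)) ⊆
          Metric.thickening (((K * M) ^ 2)⁻¹) (gammaCap Φ (tj R j) σ)) →
        broadNorm p K k (2 * A) τf (capPiece φf g) Bf U ≤
          ENNReal.ofReal C *
            (broadNorm p₀ K k A τf (capPiece φf g) Bf U ^ (1 - α) *
              broadNorm p₁ K k A τf (capPiece φf g) Bf U ^ α) := by
  refine ⟨1, one_pos, ?_⟩
  intro R hR K M hK hM A hA Φ σ cσ ι instι τf φf Bf hdata U g hg
  have hp0 : (0:ℝ) < p := by linarith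
  have hp₀0 : (0:ℝ) < p₀ := by linarith
  have hp₁0 : (0:ℝ) < p₁ := by linarith
  set θ₀ : ℝ := (1 - α) * p / p₀ with hθ₀def
  set θ₁ : ℝ := α * p / p₁ with hθ₁def
  have hθ₀ : 0 ≤ θ₀ := by
    rw [hθ₀def]
    have : 0 ≤ 1 - α := by linarith
    positivity
  have hθ₁ : 0 ≤ θ₁ := by rw [hθ₁def]; positivity
  have hsum : θ₀ + θ₁ = 1 := by
    calc θ₀ + θ₁ = p * ((1 - α) / p₀ + α / p₁) := by rw [hθ₀def, hθ₁def]; ring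
      _ = p * (1 / p) := by rw [← hrel]
      _ = 1 := by field_simp
  have hpeq : θ₀ * p₀ + θ₁ * p₁ = p := by
    rw [hθ₀def, hθ₁def]
    field_simp
    ring
  have hkn' : k - 1 ≤ n := by omega
  set G := capPiece φf g with hG
  set w : ℕ → ℝ≥0∞ := fun i => volume (Bf i ∩ U) / volume (Bf i) with hw
  set ν : ℕ → ℝ≥0∞ := fun i => nuBroad p K k (2 * A) τf G (Bf i) with hν
  set ν₀ : ℕ → ℝ≥0∞ := fun i => nuBroad p₀ K k A τf G (Bf i) with hν₀
  set ν₁ : ℕ → ℝ≥0∞ := fun i => nuBroad p₁ K k A τf G (Bf i) with hν₁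
  have hstep : ∀ i, w i * ν i ≤ (w i * ν₀ i) ^ θ₀ * (w i * ν₁ i) ^ θ₁ := by
    intro i
    exact weight_mul hθ₀ hθ₁ hsum
      (nu_interp τf G (Bf i) K k A hkn' hp₀0 hp₁0 hθ₀ hθ₁ hsum hpeq)
  have hS : (∑' i, w i * ν i) ≤
      (∑' i, w i * ν₀ i) ^ θ₀ * (∑' i, w i * ν₁ i) ^ θ₁ := by
    calc (∑' i, w i * ν i) ≤ ∑' i, (w i * ν₀ i) ^ θ₀ * (w i * ν₁ i) ^ θ₁ :=
          ENNReal.tsum_le_tsum hstep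
      _ ≤ (∑' i, w i * ν₀ i) ^ θ₀ * (∑' i, w i * ν₁ i) ^ θ₁ :=
          tsum_holder _ _ hθ₀ hθ₁ hsum
  rw [ENNReal.ofReal_one, one_mul]
  have e0 : θ₀ * (1 / p) = 1 / p₀ * (1 - α) := by
    rw [hθ₀def]; field_simp
  have e1 : θ₁ * (1 / p) = 1 / p₁ * α := by
    rw [hθ₁def]; field_simp
  calc broadNorm p K k (2 * A) τf G Bf U
      = (∑' i, w i * ν i) ^ (1 / p) := rfl
    _ ≤ ((∑' i, w i * ν₀ i) ^ θ₀ * (∑' i, w i * ν₁ i) ^ θ₁) ^ (1 / p) :=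
        ENNReal.rpow_le_rpow hS (by positivity)
    _ = (∑' i, w i * ν₀ i) ^ (θ₀ * (1 / p)) * (∑' i, w i * ν₁ i) ^ (θ₁ * (1 / p)) := by
        rw [ENNReal.mul_rpow_of_nonneg _ _ (by positivity : (0:ℝ) ≤ 1 / p),
          ENNReal.rpow_mul, ENNReal.rpow_mul]
    _ = broadNorm p₀ K k A τf G Bf U ^ (1 - α) * broadNorm p₁ K k A τf G Bf U ^ α := by
        rw [e0, e1, ENNReal.rpow_mul, ENNReal.rpow_mul]; rfl
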